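/- arXiv:1508.04293 — 4 statements merged into one kernel-verified Lean document; each statement's English description precedes it below -/
import Mathlib

section
/- For a finite abelian group F, A_F(σ) = |F|·𝟙_F (the constant function |F|) if and only if σ = 𝟙_F or σ = -𝟙_F. -/
open Finset

/-- `A_F(σ)` is the constant function `|F|` iff `σ = 𝟙` or `σ = -𝟙`. -/
theorem correlation_const_iff (F : Type*) [AddCommGroup F] [Fintype F]
    (σ : F → ℤ) (hσ : ∀ f, σ f = 1 ∨ σ f = -1) :
    (∀ f : F, (∑ ℓ : F, σ ℓ * σ (ℓ + f)) = (Fintype.card F : ℤ)) ↔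
      ((∀ f : F, σ f = 1) ∨ (∀ f : F, σ f = -1)) := by
  constructor
  · intro h
    have key : ∀ f : F, σ f = σ 0 := by
      intro f
      have hf := h f
      have hle : ∀ ℓ : F, σ ℓ * σ (ℓ + f) ≤ 1 := by
        intro ℓ
        rcases hσ ℓ with h1 | h1 <;> rcases hσ (ℓ + f) with h2 | h2 <;>
          simp [h1, h2]
      have hall : ∀ ℓ : F, σ ℓ * σ (ℓ + f) = 1 := by
        by_contra hc
        push_neg at hc
        obtain ⟨ℓ₀, hℓ₀⟩ := hc
        have hlt : σ ℓ₀ * σ (ℓ₀ + f) < 1 := lt_of_le_of_ne (hle ℓ₀) hℓ₀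
        have : (∑ ℓ : F, σ ℓ * σ (ℓ + f)) < ∑ _ℓ : F, (1 : ℤ) :=
          Finset.sum_lt_sum (fun i _ => hle i) ⟨ℓ₀, Finset.mem_univ _, hlt⟩
        simp [Finset.card_univ] at this
        omega
      have h0 := hall 0
      rw [zero_add] at h0
      rcases hσ 0 with h1 | h1 <;> rcases hσ f with h2 | h2 <;>
        simp [h1, h2] at h0 ⊢ <;> omega
    rcases hσ 0 with h1 | h1
    · left; intro f; rw [key f, h1]
    · right; intro f; rw [key f, h1]
  · rintro (h | h) <;> intro f <;> simp [h, Finset.card_univ]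
end

section
/- The real span of the image of the correlation map A_F : {-1,1}^F → ℝ^F equals the space of even functions ℝ^F_ev = {h ∈ ℝ^F : h_{-f} = h_f for all f ∈ F}. -/
open Finset

set_option linter.unusedSectionVars false

section Aux
variable {F : Type*} [AddCommGroup F] [Fintype F] [DecidableEq F]

private def ind (S : Finset F) (x : F) : ℝ := if x ∈ S then 1 else 0

private def sgn (S : Finset F) (x : F) : ℝ := if x ∈ S then -1 else 1

private lemma sgn_eq (S : Finset F) (x : F) : sgn S x = 1 - 2 * ind S x := by
  unfold sgn ind; split_ifs <;> ring

private lemma sgn_pm (S : Finset F) (x : F) : sgn S x = 1 ∨ sgn S x = -1 := by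
  unfold sgn; split_ifs <;> simp

private lemma sum_ind (S : Finset F) : ∑ ℓ : F, ind S ℓ = S.card := by
  simp [ind]

private lemma sum_ind_shift (S : Finset F) (f : F) :
    ∑ ℓ : F, ind S (ℓ + f) = S.card := by
  rw [← sum_ind S]
  exact Fintype.sum_equiv (Equiv.addRight f) _ _ (fun x => rfl)

private lemma corr_eq (S : Finset F) (f : F) :
    ∑ ℓ : F, sgn S ℓ * sgn S (ℓ + f)
      = (Fintype.card F : ℝ) - 4 * S.card + 4 * ∑ ℓ ∈ S, ind S (ℓ + f) := by
  have h1 : ∀ ℓ : F, sgn S ℓ * sgn S (ℓ + f)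
      = 1 - 2 * ind S ℓ - 2 * ind S (ℓ + f) + 4 * (ind S ℓ * ind S (ℓ + f)) := by
    intro ℓ; rw [sgn_eq, sgn_eq]; ring
  rw [Finset.sum_congr rfl fun ℓ _ => h1 ℓ]
  have h2 : ∑ ℓ : F, ind S ℓ * ind S (ℓ + f) = ∑ ℓ ∈ S, ind S (ℓ + f) := by
    rw [← Finset.univ_inter S, ← Finset.sum_ite_mem]
    refine Finset.sum_congr rfl fun ℓ _ => ?_
    by_cases h : ℓ ∈ S <;> simp [ind, h]
  rw [Finset.sum_add_distrib, Finset.sum_sub_distrib, Finset.sum_sub_distrib,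
    ← Finset.mul_sum, ← Finset.mul_sum, ← Finset.mul_sum, sum_ind, sum_ind_shift, h2]
  simp
  ring

end Aux

/-- The real span of the image of the correlation map equals the space of even
functions on `F`. -/
theorem span_correlation_eq_even (F : Type*) [AddCommGroup F] [Fintype F] :
    (Submodule.span ℝ
        {h : F → ℝ | ∃ σ : F → ℝ, (∀ f, σ f = 1 ∨ σ f = -1) ∧
          h = fun f => ∑ ℓ : F, σ ℓ * σ (ℓ + f)} : Set (F → ℝ)) =
      {h : F → ℝ | ∀ f : F, h (-f) = h f} := by
  classical
  set G : Set (F → ℝ) := {h : F → ℝ | ∃ σ : F → ℝ, (∀ f, σ f = 1 ∨ σ f = -1) ∧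
      h = fun f => ∑ ℓ : F, σ ℓ * σ (ℓ + f)} with hG
  set N : ℝ := (Fintype.card F : ℝ) with hNdef
  have hN : N ≠ 0 := Nat.cast_ne_zero.mpr Fintype.card_ne_zero
  -- the even submodule
  let E : Submodule ℝ (F → ℝ) :=
    { carrier := {h : F → ℝ | ∀ f : F, h (-f) = h f}
      add_mem' := fun ha hb f => by simp [ha f, hb f]
      zero_mem' := fun f => rfl
      smul_mem' := fun c a ha f => by simp [ha f] }
  apply subset_antisymm
  · -- span ⊆ even
    have hle : Submodule.span ℝ G ≤ E := by
      rw [Submodule.span_le]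
      rintro h ⟨σ, hσ, rfl⟩ f
      show ∑ ℓ : F, σ ℓ * σ (ℓ + -f) = ∑ ℓ : F, σ ℓ * σ (ℓ + f)
      refine Fintype.sum_equiv (Equiv.addRight (-f)) _ _ fun x => ?_
      show σ x * σ (x + -f) = σ (x + -f) * σ (x + -f + f)
      rw [neg_add_cancel_right, mul_comm]
    exact hle
  · -- even ⊆ span
    intro h hh
    show h ∈ Submodule.span ℝ G
    -- correlation functions are in the span
    have memA : ∀ S : Finset F,
        (fun f => N - 4 * S.card + 4 * ∑ ℓ ∈ S, ind S (ℓ + f)) ∈ Submodule.span ℝ G := by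
      intro S
      have he : (fun f => N - 4 * (S.card : ℝ) + 4 * ∑ ℓ ∈ S, ind S (ℓ + f))
          = fun f => ∑ ℓ : F, sgn S ℓ * sgn S (ℓ + f) :=
        funext fun f => (corr_eq S f).symm
      rw [he]
      exact Submodule.subset_span ⟨sgn S, sgn_pm S, rfl⟩
    -- constant function 1
    have one_mem : (fun _ : F => (1 : ℝ)) ∈ Submodule.span ℝ G := by
      have h1 : (fun _ : F => (1 : ℝ))
          = N⁻¹ • (fun f => N - 4 * ((∅ : Finset F).card : ℝ) + 4 * ∑ ℓ ∈ (∅ : Finset F), ind ∅ (ℓ + f)) := by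
        funext f
        simp [Pi.smul_apply, inv_mul_cancel₀ hN]
      rw [h1]
      exact Submodule.smul_mem _ _ (memA ∅)
    -- delta at 0
    set δ0 : F → ℝ := fun f => if f = 0 then 1 else 0 with hδ0
    have d0_mem : δ0 ∈ Submodule.span ℝ G := by
      have h1 : δ0 = (4 : ℝ)⁻¹ •
          ((fun f => N - 4 * (({0} : Finset F).card : ℝ) + 4 * ∑ ℓ ∈ ({0} : Finset F), ind {0} (ℓ + f))
            - (N - 4) • (fun _ : F => (1 : ℝ))) := by
        funext f
        simp only [hδ0, Pi.smul_apply, Pi.sub_apply, Finset.sum_singleton, Finset.card_singleton,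
          smul_eq_mul, mul_one, zero_add, ind, Finset.mem_singleton]
        split_ifs <;> ring
      rw [h1]
      exact Submodule.smul_mem _ _ (Submodule.sub_mem _ (memA {0}) (Submodule.smul_mem _ _ one_mem))
    -- symmetric delta functions
    set ea : F → F → ℝ := fun a f => (if f = a then 1 else 0) + (if f = -a then 1 else 0) with hea
    have ea_mem : ∀ a : F, ea a ∈ Submodule.span ℝ G := by
      intro a
      by_cases ha : a = 0
      · have h1 : ea a = (2 : ℝ) • δ0 := by
          funext f
          simp only [hea, ha, neg_zero, hδ0, Pi.smul_apply, smul_eq_mul]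
          split_ifs <;> ring
        rw [h1]
        exact Submodule.smul_mem _ _ d0_mem
      · have h0a : (0 : F) ∉ ({a} : Finset F) := by simp [Ne.symm ha]
        have hcard : ((insert 0 {a} : Finset F).card : ℝ) = 2 := by
          rw [Finset.card_insert_of_notMem h0a]; simp
        have h1 : ea a = (4 : ℝ)⁻¹ •
            ((fun f => N - 4 * ((insert 0 {a} : Finset F).card : ℝ)
                + 4 * ∑ ℓ ∈ (insert 0 {a} : Finset F), ind (insert 0 {a}) (ℓ + f))
              - (N - 8) • (fun _ : F => (1 : ℝ)) - (8 : ℝ) • δ0) := by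
          funext f
          have e1 : a + f = 0 ↔ f = -a := by rw [add_comm, add_eq_zero_iff_eq_neg]
          have e2 : a + f = a ↔ f = 0 := add_eq_left
          simp only [hea, hδ0, Pi.smul_apply, Pi.sub_apply, smul_eq_mul, mul_one, hcard,
            Finset.sum_insert h0a, Finset.sum_singleton, ind, Finset.mem_insert,
            Finset.mem_singleton, zero_add, e1, e2]
          split_ifs <;> simp_all <;> ring
        rw [h1]
        exact Submodule.smul_mem _ _ (Submodule.sub_mem _
          (Submodule.sub_mem _ (memA (insert 0 {a})) (Submodule.smul_mem _ _ one_mem))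
          (Submodule.smul_mem _ _ d0_mem))
    -- decompose h
    have hdecomp : h = ∑ a : F, (h a / 2) • ea a := by
      funext f
      have hf : h (-f) = h f := hh f
      rw [Finset.sum_apply]
      simp only [hea, Pi.smul_apply, smul_eq_mul, mul_add]
      rw [Finset.sum_add_distrib]
      have s1 : ∑ a : F, (h a / 2) * (if f = a then (1:ℝ) else 0) = h f / 2 := by
        simp [mul_ite]
      have s2 : ∑ a : F, (h a / 2) * (if f = -a then (1:ℝ) else 0) = h f / 2 := by
        have hc : ∀ a : F, (f = -a) ↔ (a = -f) := by
          intro a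
          constructor
          · intro hfa; rw [hfa, neg_neg]
          · intro hfa; rw [hfa, neg_neg]
        simp only [hc]
        rw [← hf]
        simp [mul_ite]
      rw [s1, s2]
      ring
    rw [hdecomp]
    exact Submodule.sum_mem _ fun a _ => Submodule.smul_mem _ _ (ea_mem a)
end

section
/- For a finite abelian group F, a subgroup U of F, and a configuration σ : F → {-1,1}: the correlation A_F(σ) is U-periodic (A_F(σ)_{f+u} = A_F(σ)_f for all u ∈ U) if and only if σ is U-periodic (σ_{f+u} = σ_f for all u ∈ U). -/
open Finset

/-- The correlation `A_F(σ)` is `U`-periodic iff `σ` is `U`-periodic. -/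
theorem correlation_periodic_iff (F : Type*) [AddCommGroup F] [Fintype F]
    (U : AddSubgroup F) (σ : F → ℤ) (hσ : ∀ f, σ f = 1 ∨ σ f = -1) :
    (∀ u ∈ U, ∀ f : F, (∑ ℓ : F, σ ℓ * σ (ℓ + (f + u))) = ∑ ℓ : F, σ ℓ * σ (ℓ + f)) ↔
      (∀ u ∈ U, ∀ f : F, σ (f + u) = σ f) := by
  constructor
  · intro h u hu f
    have key := h u hu 0
    simp only [zero_add, add_zero] at key
    by_contra hne
    have hlt : ∑ ℓ : F, σ ℓ * σ (ℓ + u) < ∑ ℓ : F, σ ℓ * σ ℓ := by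
      apply Finset.sum_lt_sum
      · intro i _
        rcases hσ i with h1 | h1 <;> rcases hσ (i + u) with h2 | h2 <;>
          simp [h1, h2]
      · refine ⟨f, Finset.mem_univ f, ?_⟩
        rcases hσ f with h1 | h1 <;> rcases hσ (f + u) with h2 | h2 <;>
          simp [h1, h2] at hne ⊢
    omega
  · intro h u hu f
    refine Finset.sum_congr rfl fun ℓ _ => ?_
    rw [← add_assoc, h u hu (ℓ + f)]
end

section
/- Let N ∈ ℕ, F = ℤ/Nℤ, and D ⊆ F a perfect difference set with |D| = q+1 and N = q²+q+1, meaning every nonzero h ∈ F has exactly one representation h = d₂ - d₁ with d₁, d₂ ∈ D. Then the configuration σ = (-1)^{𝟙_D} (σ_f = -1 if f ∈ D, else 1) satisfies A_F(σ)_0 = N and A_F(σ)_f = q² - 3q + 1 for every f ∈ F \ {0}. -/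
open Finset

/-- Correlation of the configuration attached to a perfect difference set in `ℤ/Nℤ`
with `N = q² + q + 1` and `|D| = q + 1`. -/
theorem perfect_difference_set_correlation (q N : ℕ) (hq : 2 ≤ q)
    (hN : N = q ^ 2 + q + 1) [NeZero N] (D : Finset (ZMod N))
    (hD : D.card = q + 1)
    (hperf : ∀ h : ZMod N, h ≠ 0 →
      ∃! p : ZMod N × ZMod N, p.1 ∈ D ∧ p.2 ∈ D ∧ p.2 - p.1 = h)
    (σ : ZMod N → ℤ) (hσ : ∀ f, σ f = if f ∈ D then -1 else 1) :
    (∑ ℓ : ZMod N, σ ℓ * σ (ℓ + 0)) = (N : ℤ) ∧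
    ∀ f : ZMod N, f ≠ 0 →
      (∑ ℓ : ZMod N, σ ℓ * σ (ℓ + f)) = (q : ℤ) ^ 2 - 3 * q + 1 := by
  have hcard : Fintype.card (ZMod N) = N := ZMod.card N
  constructor
  · have h1 : ∀ ℓ : ZMod N, σ ℓ * σ (ℓ + 0) = 1 := by
      intro ℓ
      rw [add_zero, hσ]
      by_cases h : ℓ ∈ D <;> simp [h]
    simp only [h1]
    simp [hcard]
  · intro f hf
    -- the unique pair with difference f
    obtain ⟨p₀, ⟨hp₀1, hp₀2, hp₀3⟩, hp₀u⟩ := hperf f hf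
    have hfilter : (univ.filter (fun ℓ : ZMod N => ℓ ∈ D ∧ ℓ + f ∈ D)) = {p₀.1} := by
      ext ℓ
      simp only [mem_filter, mem_univ, true_and, mem_singleton]
      constructor
      · rintro ⟨h1, h2⟩
        have := hp₀u (ℓ, ℓ + f) ⟨h1, h2, by ring⟩
        exact congrArg Prod.fst this ▸ rfl
      · rintro rfl
        have : p₀.2 = p₀.1 + f := by
          have := hp₀3; linear_combination this
        exact ⟨hp₀1, this ▸ hp₀2⟩
    have key : ∀ ℓ : ZMod N, σ ℓ * σ (ℓ + f) =
        1 - 2 * ((if ℓ ∈ D then (1:ℤ) else 0) + (if ℓ + f ∈ D then (1:ℤ) else 0)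
          - 2 * (if ℓ ∈ D ∧ ℓ + f ∈ D then (1:ℤ) else 0)) := by
      intro ℓ
      rw [hσ, hσ]
      by_cases h1 : ℓ ∈ D <;> by_cases h2 : ℓ + f ∈ D <;> simp [h1, h2] <;> ring
    have S1 : (∑ ℓ : ZMod N, if ℓ ∈ D then (1:ℤ) else 0) = (q : ℤ) + 1 := by
      rw [Finset.sum_ite_mem, univ_inter, Finset.sum_const, hD]
      push_cast; ring
    have S2 : (∑ ℓ : ZMod N, if ℓ + f ∈ D then (1:ℤ) else 0) = (q : ℤ) + 1 := by
      rw [← S1]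
      exact Fintype.sum_equiv (Equiv.addRight f) _ _ (fun ℓ => rfl)
    have S3 : (∑ ℓ : ZMod N, if ℓ ∈ D ∧ ℓ + f ∈ D then (1:ℤ) else 0) = 1 := by
      rw [Finset.sum_ite, Finset.sum_const_zero, add_zero, Finset.sum_const, hfilter]
      simp
    calc (∑ ℓ : ZMod N, σ ℓ * σ (ℓ + f))
        = ∑ ℓ : ZMod N, (1 - 2 * ((if ℓ ∈ D then (1:ℤ) else 0)
            + (if ℓ + f ∈ D then (1:ℤ) else 0)
            - 2 * (if ℓ ∈ D ∧ ℓ + f ∈ D then (1:ℤ) else 0))) := by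
          exact Finset.sum_congr rfl (fun ℓ _ => key ℓ)
      _ = (N : ℤ) - 2 * (((q:ℤ)+1) + ((q:ℤ)+1) - 2 * 1) := by
          simp only [Finset.sum_sub_distrib, Finset.sum_add_distrib, Finset.sum_const,
            ← Finset.mul_sum, S1, S2, S3, Finset.card_univ, hcard]
          push_cast; ring
      _ = (q : ℤ) ^ 2 - 3 * q + 1 := by subst hN; push_cast; ring
end
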